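/- Let (M; ∨, ∧, ⊕, ⊖, 0) be a wEMV-algebra with M ≠ {0}. Then: (i) for each x ∈ M with x ≠ 0 there exists a prime ideal P of M such that x ∉ P; (ii) the intersection of all prime ideals of M equals {0}. -/

import Mathlib

universe u

class WEMV (M : Type u) extends DistribLattice M, Zero M where
  oplus : M → M → M
  ominus : M → M → M
  zero_le : ∀ x : M, 0 ≤ x
  oplus_comm : ∀ x y : M, oplus x y = oplus y x
  oplus_assoc : ∀ x y z : M, oplus (oplus x y) z = oplus x (oplus y z)
  oplus_zero : ∀ x : M, oplus x 0 = x
  ominus_oplus_le : ∀ x y : M, ominus (oplus x y) x ≤ y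
  oplus_ominus : ∀ x y : M, oplus x (ominus y x) = x ⊔ y
  ominus_inf : ∀ x y : M, ominus x (x ⊓ y) = ominus x y
  ominus_ominus : ∀ x z : M, ominus z (ominus z x) = x ⊓ z
  ominus_sup : ∀ x y z : M, ominus z (x ⊔ y) = ominus z x ⊓ ominus z y
  inf_ominus : ∀ x y z : M, ominus (x ⊓ y) z = ominus x z ⊓ ominus y z
  ominus_oplus_assoc : ∀ x y z : M, ominus x (oplus y z) = ominus (ominus x y) z
  oplus_sup : ∀ x y z : M, oplus x (y ⊔ z) = oplus x y ⊔ oplus x z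

open WEMV

def IsIdeal {M : Type u} [WEMV M] (I : Set M) : Prop :=
  I.Nonempty ∧ (∀ x y : M, y ≤ x → x ∈ I → y ∈ I) ∧ ∀ x ∈ I, ∀ y ∈ I, oplus x y ∈ I

def IsPrimeIdeal {M : Type u} [WEMV M] (P : Set M) : Prop :=
  IsIdeal P ∧ ∀ x y : M, x ⊓ y ∈ P → x ∈ P ∨ y ∈ P


/-!
Fix `x ≠ 0`. By Zorn's lemma some ideal `P` is maximal among the ideals avoiding `x`. If `a, b ∉ P`,
maximality puts `x` into the ideals generated by `P ∪ {a}` and by `P ∪ {b}`, so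
`x ≤ r ⊕ n·a` and `x ≤ r ⊕ m·b` for some `r ∈ P`. Hence `x ⊖ r ≤ n·a ∧ m·b`, and the
distributivity `x ∧ (y ⊕ z) ≤ (x ∧ y) ⊕ (x ∧ z)` bounds this by `n·(m·(a ∧ b))`.
So if `a ∧ b ∈ P` then `x ≤ r ⊕ (x ⊖ r) ∈ P`, a contradiction: `P` is prime.
-/

section

variable {M : Type u} [WEMV M] {I : Set M}

local infixl:65 " ∔ " => oplus
local infixl:65 " ∸ " => ominus

namespace WEMV

theorem oplus_le_oplus_left (x : M) {u v : M} (h : u ≤ v) : x ∔ u ≤ x ∔ v := by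
  rw [← sup_eq_right.2 h, oplus_sup]
  exact le_sup_left

theorem oplus_le_oplus {a b c d : M} (hab : a ≤ b) (hcd : c ≤ d) : a ∔ c ≤ b ∔ d :=
  calc a ∔ c ≤ a ∔ d := oplus_le_oplus_left a hcd
    _ = d ∔ a := oplus_comm a d
    _ ≤ d ∔ b := oplus_le_oplus_left d hab
    _ = b ∔ d := oplus_comm d b

theorem le_oplus_right (x y : M) : x ≤ x ∔ y := by
  simpa only [oplus_zero] using oplus_le_oplus_left x (zero_le y)

theorem le_oplus_left (x y : M) : y ≤ x ∔ y :=
  oplus_comm y x ▸ le_oplus_right y x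

theorem ominus_le_ominus_left (z : M) {v w : M} (h : v ≤ w) : z ∸ w ≤ z ∸ v := by
  rw [← sup_eq_right.2 h, ominus_sup]
  exact inf_le_left

theorem ominus_le_ominus_right {u v : M} (h : u ≤ v) (z : M) : u ∸ z ≤ v ∸ z := by
  rw [← inf_eq_left.2 h, inf_ominus]
  exact inf_le_right

theorem ominus_self (x : M) : x ∸ x = 0 :=
  le_antisymm (by simpa only [oplus_zero] using ominus_oplus_le x 0) (zero_le _)

theorem ominus_zero (x : M) : x ∸ 0 = x := by
  rw [← ominus_self x, ominus_ominus, inf_idem]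

theorem ominus_le_self (x y : M) : x ∸ y ≤ x :=
  calc x ∸ y ≤ x ∸ 0 := ominus_le_ominus_left x (zero_le y)
    _ = x := ominus_zero x

theorem le_oplus_ominus (x y : M) : x ≤ y ∔ (x ∸ y) := by
  rw [oplus_ominus]
  exact le_sup_right

theorem ominus_le_iff_le_oplus {x y z : M} : x ∸ y ≤ z ↔ x ≤ y ∔ z :=
  ⟨fun h => (le_oplus_ominus x y).trans (oplus_le_oplus_left y h),
    fun h => (ominus_le_ominus_right h y).trans (ominus_oplus_le y z)⟩

theorem inf_oplus_le (x y z : M) : x ⊓ (y ∔ z) ≤ (x ⊓ y) ∔ (x ⊓ z) := by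
  set t := x ⊓ (y ∔ z)
  have hty : t ∸ y ≤ z := ominus_le_iff_le_oplus.2 inf_le_right
  -- `x ⊓ y` is replaced by the smaller `t ⊓ y`, which does not change `t ∸ y`.
  have hrest : t ∸ (x ⊓ y) ≤ x ⊓ z :=
    calc t ∸ (x ⊓ y) ≤ t ∸ (t ⊓ y) :=
          ominus_le_ominus_left t (inf_le_inf_right y inf_le_left)
      _ = t ∸ y := ominus_inf t y
      _ ≤ x ⊓ z := le_inf ((ominus_le_self t y).trans inf_le_left) hty
  exact ominus_le_iff_le_oplus.1 hrest

def nmul : ℕ → M → M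
  | 0, _ => 0
  | n + 1, a => a ∔ nmul n a

theorem nmul_zero (a : M) : nmul 0 a = 0 := rfl

theorem nmul_succ (n : ℕ) (a : M) : nmul (n + 1) a = a ∔ nmul n a := rfl

theorem nmul_one (a : M) : nmul 1 a = a := oplus_zero a

theorem nmul_add (n m : ℕ) (a : M) : nmul (n + m) a = nmul n a ∔ nmul m a := by
  induction n with
  | zero => rw [Nat.zero_add, nmul_zero, oplus_comm, oplus_zero]
  | succ n ih => rw [Nat.succ_add, nmul_succ, nmul_succ, ih, oplus_assoc]

theorem nmul_mono (n : ℕ) {a b : M} (h : a ≤ b) : nmul n a ≤ nmul n b := by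
  induction n with
  | zero => exact le_rfl
  | succ n ih => exact oplus_le_oplus h ih

theorem nmul_inf_le (n : ℕ) (a b : M) : nmul n a ⊓ b ≤ nmul n (a ⊓ b) := by
  induction n with
  | zero => exact inf_le_left
  | succ n ih =>
    calc nmul (n + 1) a ⊓ b = b ⊓ (a ∔ nmul n a) := inf_comm _ _
      _ ≤ (b ⊓ a) ∔ (b ⊓ nmul n a) := inf_oplus_le b a (nmul n a)
      _ ≤ (a ⊓ b) ∔ nmul n (a ⊓ b) :=
        oplus_le_oplus (inf_comm b a).le ((inf_comm b _).trans_le ih)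

theorem nmul_inf_nmul_le (n m : ℕ) (a b : M) :
    nmul n a ⊓ nmul m b ≤ nmul n (nmul m (a ⊓ b)) :=
  (nmul_inf_le n a _).trans <| nmul_mono n <| by
    rw [inf_comm, inf_comm a]
    exact nmul_inf_le m b a

end WEMV

theorem IsIdeal.mem_of_le (hI : IsIdeal I) {x y : M} (hyx : y ≤ x) (hx : x ∈ I) : y ∈ I :=
  hI.2.1 x y hyx hx

theorem IsIdeal.oplus_mem (hI : IsIdeal I) {x y : M} (hx : x ∈ I) (hy : y ∈ I) : x ∔ y ∈ I :=
  hI.2.2 x hx y hy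

theorem IsIdeal.zero_mem (hI : IsIdeal I) : (0 : M) ∈ I :=
  let ⟨_, hw⟩ := hI.1
  hI.mem_of_le (zero_le _) hw

theorem IsIdeal.nmul_mem (hI : IsIdeal I) {a : M} (ha : a ∈ I) (n : ℕ) : nmul n a ∈ I := by
  induction n with
  | zero => exact hI.zero_mem
  | succ n ih => exact hI.oplus_mem ha ih

theorem IsIdeal.mem_of_ominus_mem (hI : IsIdeal I) {x r : M} (hr : r ∈ I) (h : x ∸ r ∈ I) :
    x ∈ I :=
  hI.mem_of_le (le_oplus_ominus x r) (hI.oplus_mem hr h)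

theorem isIdeal_singleton_zero : IsIdeal ({0} : Set M) := by
  refine ⟨Set.singleton_nonempty 0, ?_, ?_⟩
  · rintro x y hyx rfl
    exact le_antisymm hyx (zero_le y)
  · rintro x rfl y rfl
    exact oplus_zero 0

theorem isIdeal_sUnion {c : Set (Set M)} (hc : ∀ I ∈ c, IsIdeal I)
    (hchain : IsChain (· ⊆ ·) c) (hne : c.Nonempty) : IsIdeal (⋃₀ c) := by
  refine ⟨?_, ?_, ?_⟩
  · obtain ⟨I, hI⟩ := hne
    obtain ⟨w, hw⟩ := (hc I hI).1
    exact ⟨w, I, hI, hw⟩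
  · rintro x y hyx ⟨I, hI, hxI⟩
    exact ⟨I, hI, (hc I hI).mem_of_le hyx hxI⟩
  · rintro x ⟨I, hI, hxI⟩ y ⟨J, hJ, hyJ⟩
    rcases hchain.total hI hJ with hIJ | hJI
    · exact ⟨J, hJ, (hc J hJ).oplus_mem (hIJ hxI) hyJ⟩
    · exact ⟨I, hI, (hc I hI).oplus_mem hxI (hJI hyJ)⟩

/-- The ideal generated by `I ∪ {a}`, when `I` is an ideal. -/
def joinIdeal (I : Set M) (a : M) : Set M :=
  {y | ∃ i ∈ I, ∃ n : ℕ, y ≤ i ∔ nmul n a}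

theorem isIdeal_joinIdeal (hI : IsIdeal I) (a : M) : IsIdeal (joinIdeal I a) := by
  refine ⟨⟨0, 0, hI.zero_mem, 0, zero_le _⟩, ?_, ?_⟩
  · rintro x y hyx ⟨i, hi, n, hx⟩
    exact ⟨i, hi, n, hyx.trans hx⟩
  · rintro x ⟨i, hi, n, hx⟩ y ⟨j, hj, m, hy⟩
    refine ⟨i ∔ j, hI.oplus_mem hi hj, n + m, ?_⟩
    calc x ∔ y ≤ (i ∔ nmul n a) ∔ (j ∔ nmul m a) := oplus_le_oplus hx hy
      _ = (i ∔ j) ∔ nmul (n + m) a := by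
        rw [nmul_add, oplus_assoc, oplus_assoc, ← oplus_assoc (nmul n a), oplus_comm (nmul n a) j,
          oplus_assoc j]

theorem subset_joinIdeal (I : Set M) (a : M) : I ⊆ joinIdeal I a :=
  fun y hy => ⟨y, hy, 0, le_oplus_right y _⟩

theorem IsIdeal.mem_joinIdeal_self (hI : IsIdeal I) (a : M) : a ∈ joinIdeal I a :=
  ⟨0, hI.zero_mem, 1, by rw [nmul_one, oplus_comm, oplus_zero]⟩

theorem IsIdeal.mem_of_mem_joinIdeal_of_inf_mem (hI : IsIdeal I) {a b x : M} (hab : a ⊓ b ∈ I)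
    (ha : x ∈ joinIdeal I a) (hb : x ∈ joinIdeal I b) : x ∈ I := by
  obtain ⟨p, hp, n, hxa⟩ := ha
  obtain ⟨q, hq, m, hxb⟩ := hb
  have hra : x ∸ (p ∔ q) ≤ nmul n a := ominus_le_iff_le_oplus.2 <|
    hxa.trans (oplus_le_oplus (le_oplus_right p q) le_rfl)
  have hrb : x ∸ (p ∔ q) ≤ nmul m b := ominus_le_iff_le_oplus.2 <|
    hxb.trans (oplus_le_oplus (le_oplus_left p q) le_rfl)
  have hr : x ∸ (p ∔ q) ∈ I :=
    hI.mem_of_le ((le_inf hra hrb).trans (nmul_inf_nmul_le n m a b))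
      (hI.nmul_mem (hI.nmul_mem hab m) n)
  exact hI.mem_of_ominus_mem (hI.oplus_mem hp hq) hr

theorem exists_maximal_isIdeal_notMem {x : M} (hx : x ≠ 0) :
    ∃ P : Set M, Maximal (fun I => IsIdeal I ∧ x ∉ I) P := by
  obtain ⟨P, -, hP⟩ := zorn_subset_nonempty {I : Set M | IsIdeal I ∧ x ∉ I}
    (fun c hcS hchain hne => ⟨⋃₀ c,
      ⟨isIdeal_sUnion (fun I hI => (hcS hI).1) hchain hne,
        fun ⟨I, hI, hxI⟩ => (hcS hI).2 hxI⟩,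
      fun _ => Set.subset_sUnion_of_mem⟩)
    {0} ⟨isIdeal_singleton_zero, hx⟩
  exact ⟨P, hP⟩

theorem isPrimeIdeal_of_maximal {x : M} {P : Set M}
    (hP : Maximal (fun I => IsIdeal I ∧ x ∉ I) P) : IsPrimeIdeal P := by
  have hPI : IsIdeal P := hP.1.1
  have hjoin : ∀ a ∉ P, x ∈ joinIdeal P a := fun a ha => by
    by_contra hx
    exact ha <|
      hP.2 ⟨isIdeal_joinIdeal hPI a, hx⟩ (subset_joinIdeal P a) (hPI.mem_joinIdeal_self a)
  refine ⟨hPI, fun a b hab => ?_⟩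
  by_contra! h
  exact hP.1.2 (hPI.mem_of_mem_joinIdeal_of_inf_mem hab (hjoin a h.1) (hjoin b h.2))

theorem exists_isPrimeIdeal_notMem {x : M} (hx : x ≠ 0) :
    ∃ P : Set M, IsPrimeIdeal P ∧ x ∉ P :=
  let ⟨P, hP⟩ := exists_maximal_isIdeal_notMem hx
  ⟨P, isPrimeIdeal_of_maximal hP, hP.1.2⟩

theorem sInter_setOf_isPrimeIdeal : ⋂₀ {P : Set M | IsPrimeIdeal P} = {0} := by
  ext y
  simp only [Set.mem_sInter, Set.mem_ofPred_eq, Set.mem_singleton_iff]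
  refine ⟨fun hy => ?_, fun hy P hP => hy ▸ hP.1.zero_mem⟩
  by_contra hy0
  obtain ⟨P, hP, hyP⟩ := exists_isPrimeIdeal_notMem hy0
  exact hyP (hy P hP)

end

theorem stmt12_general {M : Type u} [WEMV M] :
    (∀ x : M, x ≠ 0 → ∃ P : Set M, IsPrimeIdeal P ∧ x ∉ P) ∧
    ⋂₀ {P : Set M | IsPrimeIdeal P} = {(0 : M)} :=
  ⟨fun _ => exists_isPrimeIdeal_notMem, sInter_setOf_isPrimeIdeal⟩

theorem stmt12 {M : Type u} [WEMV M] (hnz : ∃ x : M, x ≠ 0) :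
    (∀ x : M, x ≠ 0 → ∃ P : Set M, IsPrimeIdeal P ∧ x ∉ P) ∧
    ⋂₀ {P : Set M | IsPrimeIdeal P} = {(0 : M)} :=
  stmt12_general
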